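/- arXiv:1103.2045 — 5 statements merged into one kernel-verified Lean document; each statement's English description precedes it below -/
import Mathlib

section
/- Let (M, ∘, e) be an F-manifold and let ε be an invertible vector field on M. Then ε is an eventual identity (i.e. the multiplication X * Y := X ∘ Y ∘ ε^{-1} defines an F-manifold structure on M) if and only if L_ε(∘)(X, Y) = [e, ε] ∘ X ∘ Y for all vector fields X, Y on M, where (L_ε(∘))(X,Y) := [ε, X∘Y] − [ε,X]∘Y − X∘[ε,Y]. -/
/-- An algebraic model of the geometric setting of the paper: `R` plays the role
of the ring `C^∞(M)` of smooth functions on a manifold `M`, and `V` plays the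
role of the `C^∞(M)`-module of smooth vector fields on `M`, equipped with its
Lie bracket and with the action of vector fields on functions by derivations. -/
structure SmoothSetting (R V : Type*) [CommRing R] [LieRing V] [Module R V] where
  /-- the action `X(f)` of a vector field `X` on a function `f` -/
  deriv : V → R → R
  deriv_add : ∀ (X : V) (f g : R), deriv X (f + g) = deriv X f + deriv X g
  deriv_mul : ∀ (X : V) (f g : R), deriv X (f * g) = deriv X f * g + f * deriv X g
  add_deriv : ∀ (X Y : V) (f : R), deriv (X + Y) f = deriv X f + deriv Y f
  smul_deriv : ∀ (f : R) (X : V) (g : R), deriv (f • X) g = f * deriv X g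
  bracket_deriv : ∀ (X Y : V) (f : R),
    deriv ⁅X, Y⁆ f = deriv X (deriv Y f) - deriv Y (deriv X f)
  bracket_smul : ∀ (X : V) (f : R) (Y : V), ⁅X, f • Y⁆ = f • ⁅X, Y⁆ + deriv X f • Y

/-- `(m, e)` is an F-manifold structure: `m` is a fiber-preserving (i.e.
`C^∞(M)`-bilinear) commutative associative multiplication on vector fields with
unit field `e`, satisfying the Hertling–Manin integrability condition
`L_{X∘Y}(∘) = X ∘ L_Y(∘) + Y ∘ L_X(∘)`. -/
structure IsFManifold (R : Type*) {V : Type*} [CommRing R] [LieRing V] [Module R V]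
    (m : V → V → V) (e : V) : Prop where
  add_left : ∀ X Y Z : V, m (X + Y) Z = m X Z + m Y Z
  smul_left : ∀ (f : R) (X Y : V), m (f • X) Y = f • m X Y
  comm : ∀ X Y : V, m X Y = m Y X
  assoc : ∀ X Y Z : V, m (m X Y) Z = m X (m Y Z)
  unit : ∀ X : V, m e X = X
  hertling_manin : ∀ X Y Z W : V,
    ⁅m X Y, m Z W⁆ - m ⁅m X Y, Z⁆ W - m Z ⁅m X Y, W⁆ =
      m X (⁅Y, m Z W⁆ - m ⁅Y, Z⁆ W - m Z ⁅Y, W⁆)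
        + m Y (⁅X, m Z W⁆ - m ⁅X, Z⁆ W - m Z ⁅X, W⁆)

/-- The dual multiplication `X * Y := X ∘ Y ∘ ε⁻¹` determined by an invertible
vector field `ε` with inverse `εinv`. -/
def dualMul {V : Type*} (m : V → V → V) (εinv : V) : V → V → V :=
  fun X Y => m (m X Y) εinv

/-- `ε` (with inverse `εinv`) is an eventual identity on the F-manifold `(m, e)`:
it is invertible and the dual multiplication `X * Y = X ∘ Y ∘ ε⁻¹` defines an
F-manifold structure on `M` with unit field `ε`. -/
def IsEventualIdentity (R : Type*) {V : Type*} [CommRing R] [LieRing V] [Module R V]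
    (m : V → V → V) (e ε εinv : V) : Prop :=
  m ε εinv = e ∧ IsFManifold R (dualMul m εinv) ε

/-- `nabla` is a (Koszul) connection on the tangent bundle, i.e. on vector fields. -/
structure IsConnection {R V : Type*} [CommRing R] [LieRing V] [Module R V]
    (S : SmoothSetting R V) (nabla : V → V → V) : Prop where
  add_left : ∀ X Y Z : V, nabla (X + Y) Z = nabla X Z + nabla Y Z
  smul_left : ∀ (f : R) (X Y : V), nabla (f • X) Y = f • nabla X Y
  add_right : ∀ X Y Z : V, nabla X (Y + Z) = nabla X Y + nabla X Z
  leibniz : ∀ (X : V) (f : R) (Y : V), nabla X (f • Y) = S.deriv X f • Y + f • nabla X Y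

/-- `nabla` is torsion-free. -/
def IsTorsionFree {V : Type*} [LieRing V] (nabla : V → V → V) : Prop :=
  ∀ X Y, nabla X Y - nabla Y X = ⁅X, Y⁆

/-- The covariant derivative `∇_X(∘)(Y, Z)` of a multiplication `m` with respect
to a connection `nabla`. -/
def covMul {V : Type*} [LieRing V] (nabla m : V → V → V) (X Y Z : V) : V :=
  nabla X (m Y Z) - m (nabla X Y) Z - m Y (nabla X Z)

/-- `nabla` is compatible with the multiplication `m`: the vector valued tensor
`∇(∘)` is totally symmetric. -/
def IsCompatible {V : Type*} [LieRing V] (nabla m : V → V → V) : Prop :=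
  ∀ X Y Z, covMul nabla m X Y Z = covMul nabla m Y X Z ∧
    covMul nabla m X Y Z = covMul nabla m X Z Y

/-- The curvature `R^∇_{X,Y}Z = ∇_X∇_Y Z − ∇_Y∇_X Z − ∇_{[X,Y]}Z`. -/
def curv {V : Type*} [LieRing V] (nabla : V → V → V) (X Y Z : V) : V :=
  nabla X (nabla Y Z) - nabla Y (nabla X Z) - nabla ⁅X, Y⁆ Z

/-- `nabla` is flat. -/
def IsFlat {V : Type*} [LieRing V] (nabla : V → V → V) : Prop :=
  ∀ X Y Z, curv nabla X Y Z = 0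

/-- The curvature condition
`V∘R_{Z,Y}X + Y∘R_{V,Z}X + Z∘R_{Y,V}X = 0` of Lorenzoni–Pedroni. -/
def CurvCircCond {V : Type*} [LieRing V] (m nabla : V → V → V) : Prop :=
  ∀ X Y Z W, m W (curv nabla Z Y X) + m Y (curv nabla W Z X)
    + m Z (curv nabla Y W X) = 0

/-- A special family of connections on the F-manifold `(m, e)`: the family of
all `∇̃^V_X(Y) = ∇̃_X(Y) + V∘X∘Y`, `V` a vector field, where `∇̃` is some
torsion-free connection compatible with `m`. -/
def IsSpecialFamily {R V : Type*} [CommRing R] [LieRing V] [Module R V]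
    (S : SmoothSetting R V) (m : V → V → V) (SF : Set (V → V → V)) : Prop :=
  ∃ nt : V → V → V, IsConnection S nt ∧ IsTorsionFree nt ∧ IsCompatible nt m ∧
    SF = { n | ∃ W : V, n = fun X Y => nt X Y + m (m W X) Y }

/-- The connection `∇^W_X(Y) = ε∘∇̃_X(ε⁻¹∘Y) − ∇̃_{ε⁻¹∘Y}(ε)∘X + W*X*Y` on the
dual F-manifold, where `*` is the dual multiplication. -/
def dualConn {V : Type*} [LieRing V] (m : V → V → V) (ε εinv : V)
    (nt : V → V → V) (W : V) : V → V → V :=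
  fun X Y => m ε (nt X (m εinv Y)) - m (nt (m εinv Y) ε) X
    + dualMul m εinv (dualMul m εinv W X) Y

/-- The dual family `D_ε(S̃)` built from a chosen connection `nt ∈ S̃`. -/
def dualFamily {V : Type*} [LieRing V] (m : V → V → V) (ε εinv : V)
    (nt : V → V → V) : Set (V → V → V) :=
  { n | ∃ W : V, n = dualConn m ε εinv nt W }

/-- The dual family `D_ε(S̃)` of a family of connections `S̃`. -/
def dualFamilyOfSet {V : Type*} [LieRing V] (m : V → V → V) (ε εinv : V)
    (SF : Set (V → V → V)) : Set (V → V → V) :=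
  { n | ∃ nt ∈ SF, ∃ W : V, n = dualConn m ε εinv nt W }

/-- The second structure connection
`∇^F_X(Y) = ε∘∇̃_X(ε⁻¹∘Y) − ∇̃_{ε⁻¹∘Y}(ε)∘X` of `(M, ∘, e, ε, ∇̃)`. -/
def secondConn {V : Type*} [LieRing V] (m : V → V → V) (ε εinv : V)
    (nt : V → V → V) : V → V → V :=
  fun X Y => m ε (nt X (m εinv Y)) - m (nt (m εinv Y) ε) X

/-- The connection
`∇_X(Y) = ε∘∇̃_X(ε⁻¹∘Y) − ∇̃_{ε⁻¹∘Y}(ε)∘X + (1/2)[ε⁻¹,ε]∘X∘Y + U*X*Y`. -/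
def uDualConn {V : Type*} [LieRing V] [Module ℚ V] (m : V → V → V)
    (ε εinv U : V) (nt : V → V → V) : V → V → V :=
  fun X Y => secondConn m ε εinv nt X Y + (2 : ℚ)⁻¹ • m (m ⁅εinv, ε⁆ X) Y
    + dualMul m εinv (dualMul m εinv U X) Y

/-- The `k`-th power `X^k` of a vector field with respect to the multiplication
`m` with unit `e`. -/
def mpow {V : Type*} (m : V → V → V) (e X : V) : ℕ → V
  | 0 => e
  | k + 1 => m X (mpow m e X k)

/-- The Legendre transformation `L_u(S̃) = { u⁻¹∘∇̃_X(u∘Y) : ∇̃ ∈ S̃ }` of a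
family of connections `S̃` by an invertible vector field `u` (with inverse
`uinv`). -/
def legFamily {V : Type*} (m : V → V → V) (uinv u : V)
    (SF : Set (V → V → V)) : Set (V → V → V) :=
  { n | ∃ nt ∈ SF, n = fun X Y => m uinv (nt X (m u Y)) }

/-! Write `q_U = L_U(∘)` and `g = ε⁻¹`. The product `X * Y = X ∘ Y ∘ g` is automatically
commutative, associative and `C^∞(M)`-bilinear with unit `ε`, so only its Hertling–Manin
condition is at stake. By Hertling–Manin for `∘`, the defect of that condition at
`(X, Y; Z, W)` is `X∘Y∘L_g(*)(Z, W) − Z∘W∘L_g(*)(X, Y)`, and `L_g(*) = −g²∘ψ` with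
`ψ(X, Y) = g∘q_ε(X, Y) + q_ε(X∘Y, g)`. So `*` is an F-manifold iff
`ψ(X, Y) = X∘Y∘ψ(e, e) = 2 g∘X∘Y∘[e, ε]`; at `Y = e` this gives `q_ε(X, g) = g∘X∘[e, ε]`,
and substituting back, `q_ε(X, Y) = [e, ε]∘X∘Y`. -/

theorem forall_mul_mul_apply_comm_iff {A : Type*} [CommMonoid A] (f : A → A → A) :
    (∀ x y z w, x * y * f z w = z * w * f x y) ↔ ∀ x y, f x y = x * y * f 1 1 := by
  refine ⟨fun h x y => by simpa using (h x y 1 1).symm, fun h x y z w => ?_⟩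
  rw [h z w, h x y]
  ac_rfl

theorem forall_apply_eq_mul_mul_iff {A : Type*} [CommRing A] {ε g c : A} (hεg : ε * g = 1)
    {q ψ : A → A → A} (hψ : ∀ x y, ψ x y = g * q x y + q (x * y) g)
    (hq_one_right : ∀ x, q x 1 = c * x) (hq_one_left : q 1 g = c * g) :
    (∀ x y, ψ x y = x * y * ψ 1 1) ↔ ∀ x y, q x y = c * x * y := by
  have hψ_one : ψ 1 1 = 2 * c * g := by rw [hψ, mul_one, hq_one_right, hq_one_left]; ring
  simp only [hψ_one, hψ]
  refine ⟨fun h x y => ?_, fun h x y => by rw [h, h]; ring⟩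
  have hxg : ∀ x, q x g = c * g * x := fun x => by
    have := h x 1
    rw [hq_one_right, mul_one] at this
    linear_combination this
  have hg : g * q x y = g * (c * x * y) := by
    have := h x y
    rw [hxg (x * y)] at this
    linear_combination this
  calc q x y = ε * (g * q x y) := by linear_combination (-(q x y)) * hεg
    _ = c * x * y := by rw [hg]; linear_combination (c * x * y) * hεg

section

variable {R V : Type*} [CommRing R] [LieRing V] [Module R V] {m : V → V → V} {e : V}

/-- The Lie derivative `L_Z(∘)(X, Y)` of the multiplication. -/
def lieDerivMul (m : V → V → V) (Z X Y : V) : V :=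
  ⁅Z, m X Y⁆ - m ⁅Z, X⁆ Y - m X ⁅Z, Y⁆

theorem lie_mul_eq_lieDerivMul_add (m : V → V → V) (Z X Y : V) :
    ⁅Z, m X Y⁆ = lieDerivMul m Z X Y + m ⁅Z, X⁆ Y + m X ⁅Z, Y⁆ := by
  rw [lieDerivMul]
  abel

def hertlingManinDefect (m : V → V → V) (X Y Z W : V) : V :=
  lieDerivMul m (m X Y) Z W - m X (lieDerivMul m Y Z W) - m Y (lieDerivMul m X Z W)

namespace IsFManifold

variable (hF : IsFManifold R m e)
include hF

/-- The ring `(V, +, ∘)`. Inside proofs that use it, `⁅·, ·⁆` still denotes the given bracket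
on `V`, not the commutator of this (commutative) ring. -/
abbrev toCommRing : CommRing V where
  mul := m
  one := e
  mul_assoc := hF.assoc
  one_mul := hF.unit
  mul_one X := (hF.comm X e).trans (hF.unit X)
  mul_comm := hF.comm
  left_distrib X Y Z := by
    change m X (Y + Z) = m X Y + m X Z
    rw [hF.comm X, hF.add_left, hF.comm Y, hF.comm Z]
  right_distrib := hF.add_left
  zero_mul X := show m 0 X = 0 by simpa using hF.add_left 0 0 X
  mul_zero X := (hF.comm X 0).trans (by simpa using hF.add_left 0 0 X)

theorem lieDerivMul_mul (X Y Z W : V) :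
    lieDerivMul m (m X Y) Z W = m X (lieDerivMul m Y Z W) + m Y (lieDerivMul m X Z W) :=
  hF.hertling_manin X Y Z W

theorem lieDerivMul_unit (X Y : V) : lieDerivMul m e X Y = 0 := by
  simpa [hF.unit] using hF.lieDerivMul_mul e e X Y

theorem lieDerivMul_unit_right (Z X : V) : lieDerivMul m Z X e = m ⁅e, Z⁆ X := by
  let := hF.toCommRing
  have hm : ∀ a b, m a b = a * b := fun _ _ => rfl
  rw [lieDerivMul, ← lie_skew Z e, hF.comm X e, hF.unit, hF.comm _ e, hF.unit]
  simp only [hm]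
  ring

theorem lieDerivMul_unit_left (Z X : V) : lieDerivMul m Z e X = m ⁅e, Z⁆ X := by
  let := hF.toCommRing
  have hm : ∀ a b, m a b = a * b := fun _ _ => rfl
  rw [lieDerivMul, ← lie_skew Z e, hF.unit, hF.unit]
  simp only [hm]
  ring

theorem lieDerivMul_inv {ε g : V} (hinv : m ε g = e) (X Y : V) :
    lieDerivMul m g X Y = -m (m g g) (lieDerivMul m ε X Y) := by
  let := hF.toCommRing
  have hm : ∀ a b, m a b = a * b := fun _ _ => rfl
  have h := hF.lieDerivMul_mul ε g X Y
  rw [hinv, hF.lieDerivMul_unit] at h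
  simp only [hm] at h hinv ⊢
  change ε * g = 1 at hinv
  linear_combination (-g) * h - lieDerivMul m g X Y * hinv

theorem lieDerivMul_dualMul (g U X Y : V) :
    lieDerivMul (dualMul m g) U X Y =
      m (lieDerivMul m U X Y) g + lieDerivMul m U (m X Y) g + m (m X Y) ⁅U, g⁆ := by
  let := hF.toCommRing
  have hm : ∀ a b, m a b = a * b := fun _ _ => rfl
  simp only [lieDerivMul, dualMul, hm]
  ring

theorem hertlingManinDefect_dualMul (g X Y Z W : V) :
    hertlingManinDefect (dualMul m g) X Y Z W =
      m (m X Y) (lieDerivMul (dualMul m g) g Z W) - m (m Z W) (lieDerivMul (dualMul m g) g X Y) := by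
  let := hF.toCommRing
  have hm : ∀ a b, m a b = a * b := fun _ _ => rfl
  simp only [hertlingManinDefect, hF.lieDerivMul_dualMul, dualMul, hF.lieDerivMul_mul]
  rw [← lie_skew (m (m X Y) g) g, ← lie_skew X g, ← lie_skew Y g,
    lie_mul_eq_lieDerivMul_add m g (m X Y) g, lie_mul_eq_lieDerivMul_add m g X Y, lie_self]
  simp only [hm]
  ring

theorem lieDerivMul_dualMul_self_of_inv {ε g : V} (hinv : m ε g = e) (X Y : V) :
    lieDerivMul (dualMul m g) g X Y =
      -m (m g g) (m g (lieDerivMul m ε X Y) + lieDerivMul m ε (m X Y) g) := by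
  let := hF.toCommRing
  have hm : ∀ a b, m a b = a * b := fun _ _ => rfl
  rw [hF.lieDerivMul_dualMul, hF.lieDerivMul_inv hinv, hF.lieDerivMul_inv hinv, lie_self]
  simp only [hm]
  ring

theorem hertlingManinDefect_dualMul_eq_zero_iff {ε g : V} (hinv : m ε g = e) (X Y Z W : V) :
    hertlingManinDefect (dualMul m g) X Y Z W = 0 ↔
      m (m X Y) (m g (lieDerivMul m ε Z W) + lieDerivMul m ε (m Z W) g) =
        m (m Z W) (m g (lieDerivMul m ε X Y) + lieDerivMul m ε (m X Y) g) := by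
  let := hF.toCommRing
  have hm : ∀ a b, m a b = a * b := fun _ _ => rfl
  have hg : IsUnit g := .of_mul_eq_one_right ε hinv
  rw [hF.hertlingManinDefect_dualMul, hF.lieDerivMul_dualMul_self_of_inv hinv,
    hF.lieDerivMul_dualMul_self_of_inv hinv]
  conv_rhs => rw [← sub_eq_zero, ← (hg.mul hg).mul_right_eq_zero]
  rw [← neg_eq_zero, iff_iff_eq]
  simp only [hm]
  congr 1
  ring

theorem isFManifold_dualMul_iff {ε g : V} (hinv : m ε g = e) :
    IsFManifold R (dualMul m g) ε ↔ ∀ X Y Z W, hertlingManinDefect (dualMul m g) X Y Z W = 0 := by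
  let := hF.toCommRing
  have hm : ∀ a b, m a b = a * b := fun _ _ => rfl
  refine ⟨fun h X Y Z W => ?_, fun h => ⟨?_, ?_, ?_, ?_, ?_, ?_⟩⟩
  · rw [hertlingManinDefect, sub_sub, sub_eq_zero]
    exact h.hertling_manin X Y Z W
  · intro X Y Z
    simp only [dualMul, hm]
    ring
  · intro f X Y
    simp only [dualMul, hF.smul_left]
  · intro X Y
    simp only [dualMul, hm]
    ring
  · intro X Y Z
    simp only [dualMul, hm]
    ring
  · intro X
    change ε * g = 1 at hinv
    simp only [dualMul, hm]
    linear_combination X * hinv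
  · intro X Y Z W
    rw [← sub_eq_zero, ← sub_sub]
    exact h X Y Z W

end IsFManifold

end

theorem statement0_general {R V : Type*} [CommRing R] [LieRing V] [Module R V]
    (m : V → V → V) (e : V)
    (hF : IsFManifold R m e) (ε εinv : V) (hinv : m ε εinv = e) :
    IsFManifold R (dualMul m εinv) ε ↔
      ∀ X Y : V, ⁅ε, m X Y⁆ - m ⁅ε, X⁆ Y - m X ⁅ε, Y⁆ = m (m ⁅e, ε⁆ X) Y := by
  let := hF.toCommRing
  let ψ X Y := εinv * lieDerivMul m ε X Y + lieDerivMul m ε (X * Y) εinv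
  calc IsFManifold R (dualMul m εinv) ε
      ↔ ∀ X Y Z W, X * Y * ψ Z W = Z * W * ψ X Y := by
        simp only [hF.isFManifold_dualMul_iff hinv,
          hF.hertlingManinDefect_dualMul_eq_zero_iff hinv]
        rfl
    _ ↔ ∀ X Y, ψ X Y = X * Y * ψ 1 1 := forall_mul_mul_apply_comm_iff ψ
    _ ↔ _ := forall_apply_eq_mul_mul_iff hinv (fun _ _ => rfl)
        (hF.lieDerivMul_unit_right ε) (hF.lieDerivMul_unit_left ε εinv)

/-- Let `(M, ∘, e)` be an F-manifold and `ε` an invertible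
vector field (with inverse `εinv`). Then `ε` is an eventual identity, i.e.
`X * Y := X ∘ Y ∘ ε⁻¹` defines an F-manifold structure on `M` (with unit `ε`),
if and only if `L_ε(∘)(X, Y) = [e, ε] ∘ X ∘ Y` for all vector fields `X, Y`. -/
theorem statement0 {R V : Type*} [CommRing R] [LieRing V] [Module R V]
    (S : SmoothSetting R V) (m : V → V → V) (e : V)
    (hF : IsFManifold R m e) (ε εinv : V) (hinv : m ε εinv = e) :
    IsFManifold R (dualMul m εinv) ε ↔
      ∀ X Y : V, ⁅ε, m X Y⁆ - m ⁅ε, X⁆ Y - m X ⁅ε, Y⁆ = m (m ⁅e, ε⁆ X) Y :=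
  statement0_general m e hF ε εinv hinv
end

section
/- Let (M, ∘, e) be an F-manifold and ε an eventual identity, with dual multiplication X * Y := X ∘ Y ∘ ε^{-1}. Then e is an eventual identity on the dual F-manifold (M, *, ε), and the map (M, ∘, e, ε) → (M, *, ε, e) is an involution on the set of F-manifolds with eventual identities: twisting the dual multiplication * by the eventual identity e (whose *-inverse is ε∘ε) recovers the original multiplication ∘ with unit e. -/
/-- If `ε` is an eventual identity on the F-manifold
`(M, ∘, e)`, with dual multiplication `X * Y = X ∘ Y ∘ ε⁻¹`, then `e` is an
eventual identity on the dual F-manifold `(M, *, ε)` with `*`-inverse `ε ∘ ε`,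
and the duality is an involution: twisting `*` by the eventual identity `e`
recovers the original multiplication `∘`. -/
theorem statement1 {R V : Type*} [CommRing R] [LieRing V] [Module R V]
    (S : SmoothSetting R V) (m : V → V → V) (e ε εinv : V)
    (hF : IsFManifold R m e) (hev : IsEventualIdentity R m e ε εinv) :
    IsEventualIdentity R (dualMul m εinv) ε e (m ε ε) ∧
      dualMul (dualMul m εinv) (m ε ε) = m := by
  obtain ⟨hinv, hdF⟩ := hev
  have hinv' : m εinv ε = e := by rw [hF.comm]; exact hinv
  have key : dualMul (dualMul m εinv) (m ε ε) = m := by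
    funext X Y
    show m (m (m (m X Y) εinv) (m ε ε)) εinv = m X Y
    rw [hF.assoc (m X Y) εinv (m ε ε), ← hF.assoc εinv ε ε, hinv', hF.unit,
      hF.assoc (m X Y) ε εinv, hinv, hF.comm (m X Y) e, hF.unit]
  refine ⟨⟨?_, ?_⟩, key⟩
  · show m (m e (m ε ε)) εinv = ε
    rw [hF.unit, hF.assoc, hinv, hF.comm ε e, hF.unit]
  · rw [key]; exact hF
end

section
/- Let (M, ∘, e) be an F-manifold with an eventual identity ε and a special family of connections S̃, and let X * Y := X ∘ Y ∘ ε^{-1}. Choose ∇̃ ∈ S̃ and define D_ε(S̃) := { ∇^W : W a vector field }, where ∇^W_X(Y) = ε∘∇̃_X(ε^{-1}∘Y) − ∇̃_{ε^{-1}∘Y}(ε)∘X + W*X*Y. Then: (a) D_ε(S̃) does not depend on the choice of ∇̃ ∈ S̃; (b) D_ε(S̃) is a special family on the dual F-manifold (M, *, ε); (c) the map (M, ∘, e, ε, S̃) → (M, *, ε, e, D_ε(S̃)) is an involution on the set of F-manifolds with eventual identities and special families of connections, i.e. applying the construction to (M, *, ε) with the eventual identity e (whose *-inverse is ε∘ε)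 and the family D_ε(S̃) recovers (M, ∘, e, S̃). -/
/-- The Lie derivative `L_U(∘)(Z, W)`. -/
def lieMul {V : Type*} [LieRing V] (m : V → V → V) (U Z W : V) : V :=
  ⁅U, m Z W⁆ - m ⁅U, Z⁆ W - m Z ⁅U, W⁆

theorem nabla_mul_eq_covMul_add {V : Type*} [LieRing V] (nabla m : V → V → V) (X Y Z : V) :
    nabla X (m Y Z) = covMul nabla m X Y Z + m (nabla X Y) Z + m Y (nabla X Z) := by
  rw [covMul]
  abel

namespace IsFManifold

variable {R V : Type*} [CommRing R] [LieRing V] [Module R V] {m : V → V → V} {e : V}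

theorem add_right (hF : IsFManifold R m e) (X Y Z : V) : m X (Y + Z) = m X Y + m X Z := by
  rw [hF.comm, hF.add_left, hF.comm Y, hF.comm Z]

theorem sub_left (hF : IsFManifold R m e) (X Y Z : V) : m (X - Y) Z = m X Z - m Y Z :=
  (AddMonoidHom.mk' (m · Z) fun X Y => hF.add_left X Y Z).map_sub X Y

theorem sub_right (hF : IsFManifold R m e) (X Y Z : V) : m X (Y - Z) = m X Y - m X Z := by
  rw [hF.comm, hF.sub_left, hF.comm Y, hF.comm Z]

theorem neg_right (hF : IsFManifold R m e) (X Y : V) : m X (-Y) = -m X Y :=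
  (AddMonoidHom.mk' (m X) (hF.add_right X)).map_neg Y

theorem smul_right (hF : IsFManifold R m e) (f : R) (X Y : V) : m X (f • Y) = f • m X Y := by
  rw [hF.comm, hF.smul_left, hF.comm]

theorem left_comm (hF : IsFManifold R m e) (X Y Z : V) : m X (m Y Z) = m Y (m X Z) := by
  rw [← hF.assoc, hF.comm X Y, hF.assoc]

theorem unit_right (hF : IsFManifold R m e) (X : V) : m X e = X := by
  rw [hF.comm, hF.unit]

theorem dualMul_eq (hF : IsFManifold R m e) (εinv X Y : V) :
    dualMul m εinv X Y = m X (m εinv Y) := by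
  rw [dualMul, hF.assoc, hF.comm Y]

theorem hertlingManin_lieMul (hF : IsFManifold R m e) (X Y Z W : V) :
    lieMul m (m X Y) Z W = m X (lieMul m Y Z W) + m Y (lieMul m X Z W) :=
  hF.hertling_manin X Y Z W

theorem lieMul_unit (hF : IsFManifold R m e) (Z W : V) : lieMul m e Z W = 0 := by
  have h := hF.hertlingManin_lieMul e e Z W
  rwa [hF.unit, hF.unit, left_eq_add] at h

theorem lieMul_eq_covMul (hF : IsFManifold R m e) {nabla : V → V → V}
    (hT : IsTorsionFree nabla) (U Z W : V) :
    lieMul m U Z W = covMul nabla m U Z W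
      - (nabla (m Z W) U - m W (nabla Z U) - m Z (nabla W U)) := by
  simp only [lieMul, covMul, ← hT _ _, hF.sub_left, hF.sub_right, hF.comm]
  abel

theorem covMul_hertlingManin (hF : IsFManifold R m e) {nabla : V → V → V}
    (hT : IsTorsionFree nabla) (X Y Z W : V) :
    covMul nabla m (m X Y) Z W - m X (covMul nabla m Y Z W) - m Y (covMul nabla m X Z W) =
      covMul nabla m (m Z W) X Y - m Z (covMul nabla m W X Y)
        - m W (covMul nabla m Z X Y) := by
  have h := hF.hertlingManin_lieMul X Y Z W
  simp only [lieMul, covMul, ← hT _ _] at h ⊢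
  rw [← sub_eq_zero] at h ⊢
  simp only [hF.sub_left, hF.sub_right, hF.comm, hF.left_comm] at h ⊢
  rw [← h]
  abel

theorem nabla_unit (hF : IsFManifold R m e) {nabla : V → V → V} (hK : IsCompatible nabla m)
    (U : V) : nabla U e = m (nabla e e) U := by
  have h : covMul nabla m U e e = covMul nabla m e e U := (hK U e e).1.trans (hK e U e).2
  simp only [covMul, hF.unit, hF.unit_right] at h
  rw [← sub_eq_zero] at h ⊢
  rw [← neg_eq_zero, ← h]
  abel

end IsFManifold

namespace IsEventualIdentity

variable {R V : Type*} [CommRing R] [LieRing V] [Module R V] {m : V → V → V} {e ε εinv : V}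

theorem mul_inv_cancel_left (hF : IsFManifold R m e) (hev : IsEventualIdentity R m e ε εinv)
    (X : V) : m ε (m εinv X) = X := by
  rw [← hF.assoc, hev.1, hF.unit]

theorem inv_mul_cancel_left (hF : IsFManifold R m e) (hev : IsEventualIdentity R m e ε εinv)
    (X : V) : m εinv (m ε X) = X := by
  rw [← hF.assoc, hF.comm εinv, hev.1, hF.unit]

theorem mul_mul_inv_cancel (hev : IsEventualIdentity R m e ε εinv) (X : V) :
    m (m ε X) εinv = X :=
  hev.2.unit X

theorem mul_surjective (hF : IsFManifold R m e) (hev : IsEventualIdentity R m e ε εinv) :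
    Function.Surjective (m ε) :=
  fun X => ⟨m εinv X, hev.mul_inv_cancel_left hF X⟩

theorem mul_injective (hF : IsFManifold R m e) (hev : IsEventualIdentity R m e ε εinv) :
    Function.Injective (m ε) :=
  fun X Y h => by rw [← hev.inv_mul_cancel_left hF X, h, hev.inv_mul_cancel_left hF]

theorem dualMul_mul_eps (hF : IsFManifold R m e) (hev : IsEventualIdentity R m e ε εinv)
    (X Y : V) : dualMul m εinv X (m Y ε) = m X Y := by
  rw [dualMul, hF.assoc, hF.comm Y, hev.mul_mul_inv_cancel]

theorem dualMul_mul_mul (hF : IsFManifold R m e) (hev : IsEventualIdentity R m e ε εinv)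
    (X Y : V) : dualMul m εinv (m ε X) (m ε Y) = m ε (m X Y) := by
  rw [hF.comm ε Y, hev.dualMul_mul_eps hF, hF.assoc]

theorem dualMul_dualMul (hF : IsFManifold R m e) (hev : IsEventualIdentity R m e ε εinv) :
    dualMul (dualMul m εinv) (m ε ε) = m := by
  funext X Y
  change dualMul m εinv (dualMul m εinv X Y) (m ε ε) = m X Y
  rw [hev.dualMul_mul_eps hF, dualMul, hF.assoc, hF.comm εinv, hev.1, hF.unit_right]

/-- Untwist `L_ε(*) = 0`, which holds because `ε` is the unit of `*`. -/
theorem lieMul_eps (hF : IsFManifold R m e) (hev : IsEventualIdentity R m e ε εinv)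
    (X Y : V) : lieMul m ε X Y = m (m X Y) ⁅e, ε⁆ := by
  have h := hev.2.lieMul_unit X (m Y ε)
  have he := hev.2.lieMul_unit e (m Y ε)
  simp only [lieMul, hev.dualMul_mul_eps hF, hF.dualMul_eq, hF.unit] at h he
  rw [← sub_eq_zero.mp he, ← lie_skew ε e, hF.comm (-_), hF.neg_right] at h
  rw [← sub_eq_zero, ← h, lieMul]
  simp only [hF.sub_right, hF.neg_right, hF.comm, hF.assoc]
  abel

theorem covMul_eps (hF : IsFManifold R m e) (hev : IsEventualIdentity R m e ε εinv)
    {nabla : V → V → V} (hT : IsTorsionFree nabla) (X Y : V) :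
    covMul nabla m ε X Y =
      nabla (m X Y) ε - m Y (nabla X ε) - m X (nabla Y ε) + m (m X Y) ⁅e, ε⁆ := by
  rw [← hev.lieMul_eps hF, hF.lieMul_eq_covMul hT]
  abel

theorem inv_mul_nabla_eps_add_nabla_inv (hF : IsFManifold R m e)
    (hev : IsEventualIdentity R m e ε εinv) {nabla : V → V → V} (hT : IsTorsionFree nabla)
    (hK : IsCompatible nabla m) (Y : V) :
    m εinv (nabla Y ε) + nabla (m ε Y) εinv - m Y (nabla εinv ε) =
      m Y (nabla e e - m εinv ⁅e, ε⁆) := by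
  -- expand `∇̃_{ε∘Y} e = ∇̃_{ε∘Y} (ε ∘ ε⁻¹)`
  have h := nabla_mul_eq_covMul_add nabla m (m ε Y) ε εinv
  rw [hev.1, hF.nabla_unit hK, (hK _ ε εinv).1, hev.covMul_eps hF hT,
    hev.mul_mul_inv_cancel] at h
  apply hev.mul_injective hF
  rw [← sub_eq_zero] at h ⊢
  simp only [hF.sub_right, hF.add_right, hF.comm, hF.assoc, hF.left_comm,
    hev.mul_inv_cancel_left hF] at h ⊢
  rw [← neg_eq_zero, ← h]
  abel

end IsEventualIdentity

section SecondConnection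

variable {R V : Type*} [CommRing R] [LieRing V] [Module R V] {m : V → V → V} {e ε εinv : V}
  {nabla : V → V → V}

theorem secondConn_mul_eps (hF : IsFManifold R m e) (hev : IsEventualIdentity R m e ε εinv)
    (X Y : V) : secondConn m ε εinv nabla X (m ε Y) = m ε (nabla X Y) - m (nabla Y ε) X := by
  simp only [secondConn, hev.inv_mul_cancel_left hF]

theorem secondConn_isTorsionFree (hF : IsFManifold R m e)
    (hev : IsEventualIdentity R m e ε εinv) (hT : IsTorsionFree nabla)
    (hK : IsCompatible nabla m) : IsTorsionFree (secondConn m ε εinv nabla) := by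
  intro X Y
  obtain ⟨x, rfl⟩ := hev.mul_surjective hF X
  obtain ⟨y, rfl⟩ := hev.mul_surjective hF Y
  rw [secondConn_mul_eps hF hev, secondConn_mul_eps hF hev, ← hT,
    nabla_mul_eq_covMul_add nabla m (m ε x) ε y,
    nabla_mul_eq_covMul_add nabla m (m ε y) ε x,
    (hK _ ε y).1, (hK _ ε x).1, hev.covMul_eps hF hT, hev.covMul_eps hF hT, ← sub_eq_zero]
  simp only [hF.comm, hF.assoc, hF.left_comm]
  abel

/-- The second summand is symmetric in `x, y, z`; this is what makes `secondConn` compatible. -/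
theorem covMul_secondConn (hF : IsFManifold R m e) (hev : IsEventualIdentity R m e ε εinv)
    (hT : IsTorsionFree nabla) (hK : IsCompatible nabla m) (x y z : V) :
    covMul (secondConn m ε εinv nabla) (dualMul m εinv) (m ε x) (m ε y) (m ε z) =
      m ε (m ε (covMul nabla m x y z)
        + (nabla (m x (m y z)) ε - m x (nabla (m y z) ε) - m y (nabla (m x z) ε)
            - m z (nabla (m x y) ε)
          + m (m x y) (nabla z ε) + m (m x z) (nabla y ε) + m (m y z) (nabla x ε))) := by
  have h := hF.covMul_hertlingManin hT ε x y z
  rw [(hK (m y z) ε x).1, (hK z ε x).1, (hK y ε x).1, hev.covMul_eps hF hT,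
    hev.covMul_eps hF hT, hev.covMul_eps hF hT, hev.covMul_eps hF hT] at h
  have h' := congrArg (m ε) h
  rw [covMul, hev.dualMul_mul_mul hF, secondConn_mul_eps hF hev,
    nabla_mul_eq_covMul_add nabla m (m ε x) y z]
  simp only [hF.dualMul_eq, secondConn_mul_eps hF hev, hF.sub_right,
    hev.inv_mul_cancel_left hF]
  rw [← sub_eq_zero] at h' ⊢
  simp only [hF.sub_right, hF.add_right, hF.sub_left, hF.comm, hF.assoc, hF.left_comm,
    hev.mul_inv_cancel_left hF] at h' ⊢
  rw [← h']
  abel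

theorem secondConn_isCompatible (hF : IsFManifold R m e)
    (hev : IsEventualIdentity R m e ε εinv) (hT : IsTorsionFree nabla)
    (hK : IsCompatible nabla m) : IsCompatible (secondConn m ε εinv nabla) (dualMul m εinv) := by
  intro X Y Z
  obtain ⟨x, rfl⟩ := hev.mul_surjective hF X
  obtain ⟨y, rfl⟩ := hev.mul_surjective hF Y
  obtain ⟨z, rfl⟩ := hev.mul_surjective hF Z
  simp only [covMul_secondConn hF hev hT hK]
  constructor
  · rw [(hK x y z).1]
    congr 2
    simp only [hF.comm, hF.left_comm]
    abel
  · rw [(hK x y z).2]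
    congr 2
    simp only [hF.comm]
    abel

theorem secondConn_isConnection {S : SmoothSetting R V} (hF : IsFManifold R m e)
    (hev : IsEventualIdentity R m e ε εinv) (hC : IsConnection S nabla) :
    IsConnection S (secondConn m ε εinv nabla) where
  add_left X Y Z := by
    simp only [secondConn, hC.add_left, hF.add_right]
    abel
  smul_left f X Y := by
    simp only [secondConn, hC.smul_left, hF.smul_right, smul_sub]
  add_right X Y Z := by
    simp only [secondConn, hF.add_right, hC.add_right, hC.add_left, hF.add_left]
    abel
  leibniz X f Y := by
    simp only [secondConn, hF.smul_right, hC.leibniz, hF.add_right, hC.smul_left, hF.smul_left,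
      hev.mul_inv_cancel_left hF, smul_sub]
    abel

theorem secondConn_add_mul (hF : IsFManifold R m e) (W : V) :
    secondConn m ε εinv (fun X Y => nabla X Y + m (m W X) Y) = secondConn m ε εinv nabla := by
  funext X Y
  simp only [secondConn, hF.add_right, hF.add_left, hF.comm, hF.assoc, hF.left_comm]
  abel

theorem dualConn_eq_secondConn_add (W : V) :
    dualConn m ε εinv nabla W =
      fun X Y => secondConn m ε εinv nabla X Y + dualMul m εinv (dualMul m εinv W X) Y :=
  rfl

theorem dualFamily_add_mul (hF : IsFManifold R m e) (W : V) :
    dualFamily m ε εinv (fun X Y => nabla X Y + m (m W X) Y) = dualFamily m ε εinv nabla := by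
  simp only [dualFamily, dualConn_eq_secondConn_add, secondConn_add_mul hF]

theorem dualConn_dualMul_secondConn (hF : IsFManifold R m e)
    (hev : IsEventualIdentity R m e ε εinv) (hT : IsTorsionFree nabla)
    (hK : IsCompatible nabla m) (U : V) :
    dualConn (dualMul m εinv) e (m ε ε) (secondConn m ε εinv nabla) U =
      fun X Y => nabla X Y + m (m (U - (nabla e e - m εinv ⁅e, ε⁆)) X) Y := by
  funext X Y
  have hεε : dualMul m εinv (m ε ε) Y = m ε Y := by
    rw [hF.dualMul_eq, hF.assoc, hev.mul_inv_cancel_left hF]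
  rw [dualConn_eq_secondConn_add, hev.dualMul_dualMul hF]
  dsimp only
  rw [secondConn, hεε, secondConn_mul_eps hF hev, secondConn]
  have h := congrArg (m X) (hev.inv_mul_nabla_eps_add_nabla_inv hF hT hK Y)
  rw [← sub_eq_zero] at h ⊢
  simp only [hF.dualMul_eq, hF.unit, hF.unit_right, hF.sub_right, hF.add_right, hF.sub_left,
    hF.comm, hF.assoc, hF.left_comm, hev.mul_inv_cancel_left hF] at h ⊢
  rw [← neg_eq_zero, ← h]
  abel

theorem dualFamily_dualMul_secondConn (hF : IsFManifold R m e)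
    (hev : IsEventualIdentity R m e ε εinv) (hT : IsTorsionFree nabla)
    (hK : IsCompatible nabla m) :
    dualFamily (dualMul m εinv) e (m ε ε) (secondConn m ε εinv nabla) =
      { n | ∃ W : V, n = fun X Y => nabla X Y + m (m W X) Y } := by
  ext n
  constructor
  · rintro ⟨U, rfl⟩
    exact ⟨_, dualConn_dualMul_secondConn hF hev hT hK U⟩
  · rintro ⟨W, rfl⟩
    refine ⟨W + (nabla e e - m εinv ⁅e, ε⁆), ?_⟩
    rw [dualConn_dualMul_secondConn hF hev hT hK, add_sub_cancel_right]

end SecondConnection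

/-- **Theorem 5.3.** Let `(M, ∘, e)` be an F-manifold with
eventual identity `ε` and special family `S̃`, and choose `∇̃ ∈ S̃`. Then:
(a) the dual family `D_ε(S̃) = {∇^W : W}` does not depend on the choice of
`∇̃ ∈ S̃`; (b) `D_ε(S̃)` is a special family on the dual F-manifold `(M, *, ε)`;
(c) the map is an involution: twisting `*` by `e` (with `*`-inverse `ε∘ε`)
recovers `∘`, and applying the dual-family construction on `(M, *, ε)` to any
member of `D_ε(S̃)` recovers `S̃`. -/
theorem statement7 {R V : Type*} [CommRing R] [LieRing V] [Module R V]
    (S : SmoothSetting R V) (m : V → V → V) (e ε εinv : V)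
    (hF : IsFManifold R m e) (hev : IsEventualIdentity R m e ε εinv)
    (SF : Set (V → V → V)) (hSF : IsSpecialFamily S m SF)
    (nt : V → V → V) (hnt : nt ∈ SF) :
    (∀ nt' ∈ SF, dualFamily m ε εinv nt' = dualFamily m ε εinv nt) ∧
      IsSpecialFamily S (dualMul m εinv) (dualFamily m ε εinv nt) ∧
      dualMul (dualMul m εinv) (m ε ε) = m ∧
      ∀ n ∈ dualFamily m ε εinv nt,
        dualFamily (dualMul m εinv) e (m ε ε) n = SF := by
  obtain ⟨nabla, hC, hT, hK, rfl⟩ := hSF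
  obtain ⟨W, rfl⟩ := hnt
  rw [dualFamily_add_mul hF]
  refine ⟨?_, ?_, hev.dualMul_dualMul hF, ?_⟩
  · rintro _ ⟨W', rfl⟩
    exact dualFamily_add_mul hF W'
  · exact ⟨secondConn m ε εinv nabla, secondConn_isConnection hF hev hC,
      secondConn_isTorsionFree hF hev hT hK, secondConn_isCompatible hF hev hT hK, rfl⟩
  · rintro _ ⟨W', rfl⟩
    rw [dualConn_eq_secondConn_add, dualFamily_add_mul hev.2]
    exact dualFamily_dualMul_secondConn hF hev hT hK
end

section
/- Let S̃ be a special family of connections on an F-manifold (M, ∘, e) and let U be a vector field on M. Then there is a unique connection ∇̃ in S̃ such that ∇̃_X(e) = U ∘ X for all vector fields X. In particular, any special family on an F-manifold contains a unique connection for which the unit field e is parallel. -/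
/-- **Lemma 6.1.** Let `S̃` be a special family of connections
on an F-manifold `(M, ∘, e)` and `U` a vector field. There is a unique
connection `∇̃ ∈ S̃` such that `∇̃_X(e) = U∘X` for all `X`. In particular `S̃`
contains a unique connection for which the unit field is parallel. -/
theorem statement10 {R V : Type*} [CommRing R] [LieRing V] [Module R V]
    (S : SmoothSetting R V) (m : V → V → V) (e : V)
    (hF : IsFManifold R m e)
    (SF : Set (V → V → V)) (hSF : IsSpecialFamily S m SF) (U : V) :
    (∃! nt : V → V → V, nt ∈ SF ∧ ∀ X : V, nt X e = m U X) ∧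
      ∃! nt : V → V → V, nt ∈ SF ∧ ∀ X : V, nt X e = 0 := by
  obtain ⟨nt0, hconn, htf, hcomp, rfl⟩ := hSF
  have hme : ∀ X : V, m X e = X := fun X => (hF.comm X e).trans (hF.unit X)
  have hneg : ∀ X Y : V, m (-X) Y = -m X Y := by
    intro X Y
    have h := hF.smul_left (-1 : R) X Y
    simpa using h
  have hsub : ∀ X Y Z : V, m (X - Y) Z = m X Z - m Y Z := by
    intro X Y Z
    rw [sub_eq_add_neg, hF.add_left, hneg, ← sub_eq_add_neg]
  have hkey : ∀ X : V, nt0 X e = m X (nt0 e e) := by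
    intro X
    have h := (hcomp X e e).1
    simp only [covMul, hF.unit, hme] at h
    -- h : nt0 X e - nt0 X e - nt0 X e = nt0 e X - nt0 e X - m X (nt0 e e)
    simpa using h
  have key : ∀ U' : V, ∃! nt : V → V → V,
      (nt ∈ { n | ∃ W : V, n = fun X Y => nt0 X Y + m (m W X) Y }) ∧
        ∀ X : V, nt X e = m U' X := by
    intro U'
    refine ⟨fun X Y => nt0 X Y + m (m (U' - nt0 e e) X) Y,
      ⟨⟨U' - nt0 e e, rfl⟩, ?_⟩, ?_⟩
    · intro X
      show nt0 X e + m (m (U' - nt0 e e) X) e = m U' X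
      rw [hme, hkey X, hsub, hF.comm X (nt0 e e)]
      abel
    · rintro n ⟨⟨W, rfl⟩, hprop⟩
      have he := hprop e
      simp only [hme] at he
      -- he : nt0 e e + W = U'
      have hW : W = U' - nt0 e e := eq_sub_of_add_eq' he
      rw [hW]
  have hm0 : ∀ X : V, m 0 X = 0 := by
    intro X
    have h := hF.smul_left (0 : R) e X
    simpa using h
  refine ⟨key U, ?_⟩
  obtain ⟨nt, ⟨hmem, hprop⟩, huniq⟩ := key 0
  refine ⟨nt, ⟨hmem, fun X => (hprop X).trans (hm0 X)⟩, ?_⟩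
  intro n hn
  exact huniq n ⟨hn.1, fun X => (hn.2 X).trans (hm0 X).symm⟩
end

section
/- Let M be a manifold and U a fixed vector field on M. The map (∘, e, ε, ∇̃) → (*, ε, e, ∇), where X*Y := X∘Y∘ε^{-1} and ∇_X(Y) := ε∘∇̃_X(ε^{-1}∘Y) − ∇̃_{ε^{-1}∘Y}(ε)∘X + (1/2)[ε^{-1}, ε]∘X∘Y + U*X*Y, is an involution on the set of quadruples (∘, e, ε, ∇̃) in which ∘ is the multiplication of an F-manifold structure on M with unit field e, ε is an eventual identity on (M, ∘, e), and ∇̃ is a torsion-free connection compatible with ∘ satisfying ∇̃_X(e) = U∘X for all X. In particular, ∇ is torsion-free, compatible with *, satisfies ∇_X(ε) = U*X for all X, and applying the same map to (*, ε, e, ∇) gives back (∘, e, ε, ∇̃). -/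
/-- **Proposition 6.2.** Let `U` be a fixed vector field. The
map `(∘, e, ε, ∇̃) ↦ (*, ε, e, ∇)`, with
`∇_X(Y) = ε∘∇̃_X(ε⁻¹∘Y) − ∇̃_{ε⁻¹∘Y}(ε)∘X + (1/2)[ε⁻¹,ε]∘X∘Y + U*X*Y`, is an
involution on quadruples where `∘` is an F-manifold multiplication with unit
`e`, `ε` is an eventual identity and `∇̃` is a compatible torsion-free
connection with `∇̃_X(e) = U∘X`. In particular `∇` is a torsion-free connection
compatible with `*` with `∇_X(ε) = U*X`, and applying the same map to
`(*, ε, e, ∇)` gives back `(∘, e, ε, ∇̃)`. -/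
theorem statement11 {R V : Type*} [CommRing R] [LieRing V] [Module R V] [Module ℚ V]
    (S : SmoothSetting R V) (m : V → V → V) (e ε εinv : V)
    (nt : V → V → V) (U : V)
    (hF : IsFManifold R m e) (hev : IsEventualIdentity R m e ε εinv)
    (hc : IsConnection S nt) (htf : IsTorsionFree nt) (hcm : IsCompatible nt m)
    (hU : ∀ X : V, nt X e = m U X) :
    IsFManifold R (dualMul m εinv) ε ∧
      IsEventualIdentity R (dualMul m εinv) ε e (m ε ε) ∧
      IsConnection S (uDualConn m ε εinv U nt) ∧
      IsTorsionFree (uDualConn m ε εinv U nt) ∧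
      IsCompatible (uDualConn m ε εinv U nt) (dualMul m εinv) ∧
      (∀ X : V, uDualConn m ε εinv U nt X ε = dualMul m εinv U X) ∧
      dualMul (dualMul m εinv) (m ε ε) = m ∧
      uDualConn (dualMul m εinv) e (m ε ε) U (uDualConn m ε εinv U nt) = nt := by
  classical
  obtain ⟨hsi0, hFd⟩ := hev
  have hzero : ∀ X : V, m 0 X = 0 := by
    intro X
    have := hF.smul_left (0:R) 0 X
    rw [zero_smul, zero_smul] at this
    exact this
  letI ring : CommRing V :=
  { (inferInstance : AddCommGroup V) with
    mul := m
    one := e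
    mul_assoc := hF.assoc
    mul_comm := hF.comm
    one_mul := hF.unit
    mul_one := fun X => (hF.comm X e).trans (hF.unit X)
    right_distrib := hF.add_left
    left_distrib := fun a b c => by
      show m a (b + c) = m a b + m a c
      rw [hF.comm a (b+c), hF.add_left, hF.comm b a, hF.comm c a]
    zero_mul := hzero
    mul_zero := fun X => (hF.comm X 0).trans (hzero X) }
  have hmm : ∀ a b : V, m a b = a * b := fun _ _ => rfl
  have he : e = (1:V) := rfl
  have hdm : ∀ a b : V, dualMul m εinv a b = a * b * εinv := fun _ _ => rfl
  have hsi : ε * εinv = 1 := hsi0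
  have hsi' : εinv * ε = 1 := by rw [mul_comm]; exact hsi
  have hsmul : ∀ (f : R) (a b : V), a * (f • b) = f • (a * b) := by
    intro f a b
    calc a * (f • b) = (f • b) * a := by ring
    _ = f • (b * a) := hF.smul_left f b a
    _ = f • (a * b) := by rw [mul_comm b a]
  have hsmul' : ∀ (f : R) (a b : V), (f • a) * b = f • (a * b) := hF.smul_left
  have htf' : ∀ X Y : V, nt X Y - nt Y X = ⁅X, Y⁆ := htf
  have hC : ∀ X Y Z : V, nt X (Y*Z) - nt X Y * Z - Y * nt X Z
      = nt Y (X*Z) - nt Y X * Z - X * nt Y Z := fun X Y Z => (hcm X Y Z).1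
  have hU1 : ∀ X : V, nt X 1 = U * X := hU
  have hCs : ∀ X Y Z : V, nt X (Y*Z) - nt Y (X*Z) = ⁅X,Y⁆*Z + Y*nt X Z - X*nt Y Z := by
    intro X Y Z; linear_combination hC X Y Z + Z * htf' X Y
  have hswap : ∀ a b : V, ⁅a, b⁆ = -⁅b, a⁆ := fun a b => (lie_skew a b).symm
  have hHM : ∀ X Y Z W : V, ⁅X*Y, Z*W⁆ - ⁅X*Y,Z⁆*W - Z*⁅X*Y,W⁆
      = X*(⁅Y,Z*W⁆-⁅Y,Z⁆*W-Z*⁅Y,W⁆) + Y*(⁅X,Z*W⁆-⁅X,Z⁆*W-Z*⁅X,W⁆) :=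
    hF.hertling_manin
  have hKey : ∀ X Y : V, ⁅X*Y*εinv, ε⁆ = X*⁅Y,ε⁆*εinv + Y*⁅X,ε⁆*εinv := by
    intro X Y
    have h := hFd.hertling_manin X Y ε ε
    rw [hFd.unit ε] at h
    simp only [hdm] at h
    linear_combination -h - (2*(⁅X*Y*εinv,ε⁆ - X*⁅Y,ε⁆*εinv - Y*⁅X,ε⁆*εinv)) * hsi
  have hPe : ∀ A B : V, ⁅A*B, ε⁆ = A*⁅B,ε⁆ + B*⁅A,ε⁆ - ⁅(1:V),ε⁆*A*B := by
    intro A B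
    have e1 := hKey A (B*ε)
    rw [show A*(B*ε)*εinv = A*B from by linear_combination (A*B)*hsi] at e1
    have e2 := hKey 1 (B*ε)
    rw [show (1:V)*(B*ε)*εinv = B from by linear_combination B*hsi] at e2
    linear_combination e1 - A*e2 + (B*⁅A,ε⁆ - A*B*⁅(1:V),ε⁆)*hsi
  have hP : ∀ A B : V, ⁅ε, A*B⁆ - ⁅ε,A⁆*B - A*⁅ε,B⁆ = ⁅(1:V),ε⁆*A*B := by
    intro A B
    linear_combination hswap ε (A*B) - B*(hswap ε A) - A*(hswap ε B) - hPe A B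
  have hE0 : ∀ Z W : V, ⁅(1:V), Z*W⁆ - ⁅(1:V),Z⁆*W - Z*⁅(1:V),W⁆ = 0 := by
    intro Z W
    have h := hHM 1 1 Z W
    simp only [one_mul] at h
    linear_combination -h
  have hQ : ∀ Z W : V, ⁅εinv, Z*W⁆ - ⁅εinv,Z⁆*W - Z*⁅εinv,W⁆
      = -(⁅(1:V),ε⁆*εinv*εinv*Z*W) := by
    intro Z W
    have h1 := hHM (εinv*εinv) ε Z W
    rw [show εinv*εinv*ε = εinv from by linear_combination εinv*hsi'] at h1
    have h2 := hHM εinv εinv Z W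
    linear_combination (-1)*h1 - ε*h2 - (εinv*εinv)*(hP Z W)
      - (2*(⁅εinv, Z*W⁆ - ⁅εinv,Z⁆*W - Z*⁅εinv,W⁆))*hsi
  have hb : ⁅εinv, ε⁆ = ⁅(1:V),ε⁆*εinv + ⁅(1:V),ε⁆*εinv := by
    have h := hPe εinv ε
    rw [hsi', lie_self] at h
    linear_combination (-εinv)*h + (⁅(1:V),ε⁆*εinv - ⁅εinv,ε⁆)*hsi'
  have hs2e : ⁅ε*ε, (1:V)⁆ = -(ε*⁅(1:V),ε⁆) - ε*⁅(1:V),ε⁆ := by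
    linear_combination hswap (ε*ε) 1 - hE0 ε ε
  have half_two : ∀ W : V, (2:ℚ)⁻¹ • (W + W) = W := by
    intro W
    rw [← two_smul ℚ W, smul_smul]
    norm_num
  have half1 : ∀ X Y : V, (2:ℚ)⁻¹ • (⁅εinv,ε⁆ * X * Y) = ⁅(1:V),ε⁆*εinv*X*Y := by
    intro X Y
    rw [hb, show (⁅(1:V),ε⁆*εinv + ⁅(1:V),ε⁆*εinv)*X*Y
        = (⁅(1:V),ε⁆*εinv*X*Y) + (⁅(1:V),ε⁆*εinv*X*Y) from by ring, half_two]
  have half2 : ∀ X Y : V, (2:ℚ)⁻¹ • (⁅ε*ε,(1:V)⁆ * X * εinv * Y * εinv)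
      = -(ε*⁅(1:V),ε⁆*X*εinv*Y*εinv) := by
    intro X Y
    rw [hs2e, show (-(ε*⁅(1:V),ε⁆) - ε*⁅(1:V),ε⁆)*X*εinv*Y*εinv
        = (-(ε*⁅(1:V),ε⁆*X*εinv*Y*εinv)) + (-(ε*⁅(1:V),ε⁆*X*εinv*Y*εinv)) from by ring,
      half_two]
  have hXiY : ∀ X Y : V, nt X (εinv*Y)
      = nt εinv (X*Y) + ⁅X,εinv⁆*Y - X*nt εinv Y + εinv*nt X Y := by
    intro X Y; linear_combination hCs X εinv Y
  have hNiYs : ∀ Y : V, nt εinv (ε*Y)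
      = U*Y + ⁅εinv,Y⁆*ε + Y*nt εinv ε - εinv*nt Y ε := by
    intro Y
    have h := hCs εinv Y ε
    rw [hsi', hU1, show Y*ε = ε*Y from mul_comm Y ε] at h
    linear_combination h
  have hG : ∀ W A B C : V,
      (nt (W*A) (B*C) - nt (W*A) B * C - B * nt (W*A) C)
        - (nt (W*B) (A*C) - nt (W*B) A * C - A * nt (W*B) C)
      = A*(nt B (W*C) - nt B W * C - W * nt B C)
        - B*(nt A (W*C) - nt A W * C - W * nt A C) := by
    intro W A B C
    have h1 := hC (W*A) B C
    have h2 := hC (W*B) A C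
    have h3 := hCs B A (W*C)
    rw [show A*(W*C) = W*A*C from by ring, show B*(W*C) = W*B*C from by ring] at h3
    have h4 := hCs B A W
    rw [show A*W = W*A from mul_comm A W, show B*W = W*B from mul_comm B W] at h4
    linear_combination h1 - h2 + h3 - C*h4
  have hDelta : ∀ A B C : V,
      (nt (ε*A) (B*C) - nt (ε*A) B * C - B * nt (ε*A) C)
        - (nt (ε*B) (A*C) - nt (ε*B) A * C - A * nt (ε*B) C)
      = nt (B*C) ε * A - nt (A*C) ε * B - A*C*nt B ε + B*C*nt A ε := by
    intro A B C
    have hg := hG ε A B C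
    linear_combination hg - A*(htf' (B*C) ε) + B*(htf' (A*C) ε)
      - A*(hCs ε B C) + B*(hCs ε A C) - A*(hPe B C) + B*(hPe A C)
      - A*C*(hswap ε B) + B*C*(hswap ε A)
  have hdd : dualMul (dualMul m εinv) (m ε ε) = m := by
    funext X Y
    show dualMul m εinv (dualMul m εinv X Y) (m ε ε) = m X Y
    simp only [hdm, hmm]
    linear_combination (X*Y*εinv*ε + X*Y)*hsi
  have hgoal6 : ∀ X : V, uDualConn m ε εinv U nt X ε = dualMul m εinv U X := by
    intro X
    simp only [uDualConn, secondConn, dualMul, hmm]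
    simp only [half1]
    rw [hsi', hU1 X, show nt 1 ε = U*ε + ⁅(1:V),ε⁆ from by linear_combination htf' 1 ε + hU1 ε]
    linear_combination (⁅(1:V),ε⁆*X + U*X*εinv)*hsi'
  have hconn : IsConnection S (uDualConn m ε εinv U nt) := by
    refine ⟨?_, ?_, ?_, ?_⟩
    · intro X Y Z
      simp only [uDualConn, secondConn, dualMul, hmm, half1]
      linear_combination ε * hc.add_left X Y (εinv*Z)
    · intro f X Y
      simp only [uDualConn, secondConn, dualMul, hmm, half1]
      rw [hc.smul_left]
      simp only [hsmul, hsmul', smul_add, smul_sub]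
    · intro X Y Z
      simp only [uDualConn, secondConn, dualMul, hmm, half1]
      rw [show εinv*(Y+Z) = εinv*Y + εinv*Z from mul_add εinv Y Z,
        hc.add_right X (εinv*Y) (εinv*Z), hc.add_left (εinv*Y) (εinv*Z) ε]
      ring
    · intro X f Y
      simp only [uDualConn, secondConn, dualMul, hmm, half1]
      rw [show εinv*(f•Y) = f•(εinv*Y) from hsmul f εinv Y,
        hc.leibniz X f (εinv*Y), hc.smul_left f (εinv*Y) ε]
      simp only [mul_add, hsmul, hsmul', smul_add, smul_sub]
      rw [show ε*(εinv*Y) = Y from by linear_combination Y*hsi]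
      abel
  have htfD : IsTorsionFree (uDualConn m ε εinv U nt) := by
    intro X Y
    simp only [uDualConn, secondConn, dualMul, hmm, half1]
    rw [hXiY X Y, hXiY Y X, mul_comm Y X,
      show nt (εinv*Y) ε = nt ε (εinv*Y) + ⁅εinv*Y,ε⁆ from by linear_combination htf' (εinv*Y) ε,
      show nt (εinv*X) ε = nt ε (εinv*X) + ⁅εinv*X,ε⁆ from by linear_combination htf' (εinv*X) ε,
      hXiY ε Y, hXiY ε X, hNiYs Y, hNiYs X, hPe εinv Y, hPe εinv X,
      hswap ε εinv, hb, hswap X εinv, hswap Y εinv,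
      show nt Y ε = nt ε Y + ⁅Y,ε⁆ from by linear_combination htf' Y ε,
      show nt X ε = nt ε X + ⁅X,ε⁆ from by linear_combination htf' X ε]
    linear_combination (εinv*ε)*(htf' X Y) + ⁅X,Y⁆*hsi
  have hcomp : IsCompatible (uDualConn m ε εinv U nt) (dualMul m εinv) := by
    intro X Y Z
    constructor
    · simp only [covMul, uDualConn, secondConn, dualMul, hmm, half1]
      rw [show εinv*(Y*Z*εinv) = (εinv*Y)*(εinv*Z) from by ring,
        show εinv*(X*Z*εinv) = (εinv*X)*(εinv*Z) from by ring]
      have hD := hDelta (εinv*X) (εinv*Y) (εinv*Z)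
      rw [show ε*(εinv*X) = X from by linear_combination X*hsi,
        show ε*(εinv*Y) = Y from by linear_combination Y*hsi] at hD
      linear_combination (norm := ring_nf) ε*hD
        + (X*nt (εinv*Y*(εinv*Z)) ε - Y*nt (εinv*X*(εinv*Z)) ε
          + εinv*Y*Z*nt (εinv*X) ε - εinv*Z*X*nt (εinv*Y) ε)*hsi
    · simp only [covMul, uDualConn, secondConn, dualMul, hmm, half1]
      rw [mul_comm Z Y]
      ring
  have hinvol : uDualConn (dualMul m εinv) e (m ε ε) U (uDualConn m ε εinv U nt) = nt := by
    funext X Y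
    simp only [uDualConn, secondConn, dualMul, hmm, he]
    simp only [half1, half2]
    simp only [mul_one, one_mul]
    rw [show εinv*(ε*ε*Y*εinv) = Y from by linear_combination (Y*ε*εinv + Y)*hsi]
    rw [show ε*ε*Y*εinv = ε*Y from by linear_combination (ε*Y)*hsi]
    rw [show nt (ε*Y) εinv = nt εinv (ε*Y) + ⁅ε*Y, εinv⁆ from by
        linear_combination htf' (ε*Y) εinv,
      hNiYs Y,
      show ⁅ε*Y, εinv⁆ = -⁅εinv, ε*Y⁆ from hswap (ε*Y) εinv,
      show ⁅εinv, ε*Y⁆ = ⁅εinv,ε⁆*Y + ε*⁅εinv,Y⁆ - ⁅(1:V),ε⁆*εinv*εinv*ε*Y from by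
        linear_combination hQ ε Y,
      hb,
      show nt Y ε = nt ε Y + ⁅Y,ε⁆ from by linear_combination htf' Y ε]
    linear_combination (norm := ring_nf)
      (nt X Y + εinv*X*nt ε Y + εinv*X*⁅Y,ε⁆ - ε*εinv*εinv*⁅(1:V),ε⁆*X*Y
        + (ε^3*εinv^3 + ε^2*εinv^2 + ε*εinv)*X*Y*U)*hsi
  refine ⟨hFd, ⟨?_, ?_⟩, hconn, htfD, hcomp, hgoal6, hdd, hinvol⟩
  · show dualMul m εinv e (m ε ε) = ε
    simp only [hdm, hmm, he]
    linear_combination ε*hsi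
  · rw [hdd]
    exact hF
end
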